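/- Let V be a module over the Lie algebra gl_n(F) (F = ℝ or ℂ) and λ ∈ V a nonzero vector such that E_{i,j}·λ = 0 whenever j > i+1, and E_{i,i+1}·λ = c_i·λ with c_i ≠ 0 for 1 ≤ i ≤ n-1. If the image of Lie(Ū_n) (strictly lower triangular matrices) in End(V) applied to λ lands in U(gl_{n-1}(F))·Z(U(gl_n(F)))·λ, then also U(Lie(Ū_n))·λ ⊆ U(gl_{n-1}(F))·Z(U(gl_n(F)))·λ, where the action of the universal enveloping algebra is the canonical extension of the Lie algebra action. -/

import Mathlib

open UniversalEnvelopingAlgebra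

attribute [local instance 100] LieRing.ofAssociativeRing

variable {F : Type*} [RCLike F] {n : ℕ}

/-- `gl_n(F)`. -/
abbrev gl (F : Type*) [RCLike F] (n : ℕ) := Matrix (Fin (n + 1)) (Fin (n + 1)) F

/-- The action of `U(gl_n(F))` on a `gl_n(F)`-module `V`, canonically extending
the Lie algebra action. -/
noncomputable def uAction (F : Type*) [RCLike F] (n : ℕ) (V : Type*)
    [AddCommGroup V] [Module F V] [LieRingModule (gl F n) V] [LieModule F (gl F n) V] :
    UniversalEnvelopingAlgebra F (gl F n) →ₐ[F] Module.End F V :=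
  (UniversalEnvelopingAlgebra.lift F) (LieModule.toEnd F (gl F n) V)

/-- The image of `U(gl_{n-1}(F))` inside `U(gl_n(F))`, where `gl_{n-1}(F)` is
embedded as the top-left `(n-1) × (n-1)` block. -/
noncomputable def ueaBlock (F : Type*) [RCLike F] (n : ℕ) :
    Subalgebra F (UniversalEnvelopingAlgebra F (gl F n)) :=
  Algebra.adjoin F ((ι F) ''
    {X : gl F n | ∀ i j, (i = Fin.last n ∨ j = Fin.last n) → X i j = 0})

/-- The image of `U(n̄)` inside `U(gl_n(F))`, where `n̄ = Lie(Ū_n)` is the Lie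
subalgebra of strictly lower triangular matrices. -/
noncomputable def ueaLower (F : Type*) [RCLike F] (n : ℕ) :
    Subalgebra F (UniversalEnvelopingAlgebra F (gl F n)) :=
  Algebra.adjoin F ((ι F) '' {X : gl F n | ∀ i j, i ≤ j → X i j = 0})

/-!
Write `W = U(gl_{n-1})·Z·λ`; it suffices that `W` is stable under every `X ∈ n̄`. For a block
matrix `Y`, the bracket `⁅X, Y⁆` has zero last column, so it is a block matrix plus a strictly
lower triangular matrix supported on the last row: `X Y = Y X + B + N` in `U(gl_n)` with
`B ∈ gl_{n-1}` and `N ∈ n̄`. Pushing `X` to the right through a monomial `a` in `gl_{n-1}` thus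
shows `X a z λ ∈ W` by induction on the length of `a`, simultaneously for all `X ∈ n̄`; at the end
`X z λ = z X λ ∈ W` by centrality of `z` and the hypothesis `n̄·λ ⊆ W`.
-/

section SubalgebraCenterSpan

variable {K A V : Type*} [CommRing K] [Ring A] [Algebra K A] [AddCommGroup V] [Module K V]

def subalgebraCenterSpan (ρ : A →ₐ[K] Module.End K V) (B : Subalgebra K A) (v : V) :
    Submodule K V :=
  Submodule.span K {w | ∃ a ∈ B, ∃ z ∈ Subalgebra.center K A, w = ρ a (ρ z v)}

variable {ρ : A →ₐ[K] Module.End K V} {B : Subalgebra K A} {v : V}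

lemma apply_apply_mem_subalgebraCenterSpan {a z : A} (ha : a ∈ B)
    (hz : z ∈ Subalgebra.center K A) : ρ a (ρ z v) ∈ subalgebraCenterSpan ρ B v :=
  Submodule.subset_span ⟨a, ha, z, hz, rfl⟩

lemma self_mem_subalgebraCenterSpan : v ∈ subalgebraCenterSpan ρ B v := by
  simpa using apply_apply_mem_subalgebraCenterSpan (ρ := ρ) (v := v) (one_mem B) (one_mem _)

lemma subalgebraCenterSpan_le_comap {f : Module.End K V}
    (h : ∀ a ∈ B, ∀ z ∈ Subalgebra.center K A, f (ρ a (ρ z v)) ∈ subalgebraCenterSpan ρ B v) :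
    subalgebraCenterSpan ρ B v ≤ (subalgebraCenterSpan ρ B v).comap f :=
  Submodule.span_le.2 fun _ ⟨a, ha, z, hz, hw⟩ => hw ▸ h a ha z hz

lemma apply_mem_subalgebraCenterSpan_of_mem {a : A} (ha : a ∈ B) {w : V}
    (hw : w ∈ subalgebraCenterSpan ρ B v) : ρ a w ∈ subalgebraCenterSpan ρ B v := by
  refine subalgebraCenterSpan_le_comap (fun b hb z hz => ?_) hw
  rw [← Module.End.mul_apply, ← map_mul]
  exact apply_apply_mem_subalgebraCenterSpan (mul_mem ha hb) hz

lemma apply_mem_subalgebraCenterSpan_of_mem_center {z : A} (hz : z ∈ Subalgebra.center K A)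
    {w : V} (hw : w ∈ subalgebraCenterSpan ρ B v) : ρ z w ∈ subalgebraCenterSpan ρ B v := by
  refine subalgebraCenterSpan_le_comap (fun b hb z' hz' => ?_) hw
  rw [← Module.End.mul_apply, ← map_mul, ← Subalgebra.mem_center_iff.1 hz,
    map_mul, Module.End.mul_apply, ← Module.End.mul_apply (ρ z), ← map_mul]
  exact apply_apply_mem_subalgebraCenterSpan hb (mul_mem hz hz')

variable {S N : Set A}
  (hcomm : ∀ x ∈ N, ∀ s ∈ S, ∃ b ∈ Algebra.adjoin K S, ∃ x' ∈ N, x * s = s * x + b + x')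
  (hN : ∀ x ∈ N, ρ x v ∈ subalgebraCenterSpan ρ (Algebra.adjoin K S) v)
include hcomm hN

lemma mul_apply_mem_subalgebraCenterSpan {a : A} (ha : a ∈ Algebra.adjoin K S) :
    ∀ x ∈ N, ∀ z ∈ Subalgebra.center K A,
      ρ (x * a) (ρ z v) ∈ subalgebraCenterSpan ρ (Algebra.adjoin K S) v := by
  rw [← Subalgebra.mem_toSubmodule, Algebra.adjoin_eq_span] at ha
  induction ha using Submodule.span_induction with
  | mem m hm =>
    induction hm using Submonoid.closure_induction_left with
    | one =>
      intro x hx z hz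
      rw [mul_one, ← Module.End.mul_apply, ← map_mul, Subalgebra.mem_center_iff.1 hz, map_mul,
        Module.End.mul_apply]
      exact apply_mem_subalgebraCenterSpan_of_mem_center hz (hN x hx)
    | mul_left s hs m hm ih =>
      intro x hx z hz
      obtain ⟨b, hb, x', hx', hxs⟩ := hcomm x hx s hs
      have hm' : m ∈ Algebra.adjoin K S := Submonoid.closure_le.2 Algebra.subset_adjoin hm
      rw [← mul_assoc, hxs, add_mul, add_mul, mul_assoc, map_add, map_add, LinearMap.add_apply,
        LinearMap.add_apply, map_mul, Module.End.mul_apply]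
      exact add_mem (add_mem
        (apply_mem_subalgebraCenterSpan_of_mem (Algebra.subset_adjoin hs) (ih x hx z hz))
        (apply_apply_mem_subalgebraCenterSpan (mul_mem hb hm') hz)) (ih x' hx' z hz)
  | zero => simp
  | add a b _ _ iha ihb =>
    intro x hx z hz
    rw [mul_add, map_add, LinearMap.add_apply]
    exact add_mem (iha x hx z hz) (ihb x hx z hz)
  | smul c a _ ih =>
    intro x hx z hz
    rw [mul_smul_comm, map_smul, LinearMap.smul_apply]
    exact Submodule.smul_mem _ c (ih x hx z hz)

lemma apply_mem_subalgebraCenterSpan_of_mem_adjoin {u : A} (hu : u ∈ Algebra.adjoin K N) :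
    ρ u v ∈ subalgebraCenterSpan ρ (Algebra.adjoin K S) v := by
  suffices ∀ w ∈ subalgebraCenterSpan ρ (Algebra.adjoin K S) v,
      ρ u w ∈ subalgebraCenterSpan ρ (Algebra.adjoin K S) v from
    this v self_mem_subalgebraCenterSpan
  induction hu using Algebra.adjoin_induction with
  | mem x hx =>
    refine subalgebraCenterSpan_le_comap fun a ha z hz => ?_
    rw [← Module.End.mul_apply, ← map_mul]
    exact mul_apply_mem_subalgebraCenterSpan hcomm hN ha x hx z hz
  | algebraMap r =>
    intro w hw
    rw [AlgHom.commutes, Module.algebraMap_end_apply]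
    exact Submodule.smul_mem _ r hw
  | add x y _ _ ihx ihy =>
    intro w hw
    rw [map_add, LinearMap.add_apply]
    exact add_mem (ihx w hw) (ihy w hw)
  | mul x y _ _ ihx ihy =>
    intro w hw
    rw [map_mul, Module.End.mul_apply]
    exact ihx _ (ihy w hw)

end SubalgebraCenterSpan

lemma Matrix.exists_lie_eq_block_add_strictLower {R : Type*} [CommRing R]
    {X Y : Matrix (Fin (n + 1)) (Fin (n + 1)) R} (hX : ∀ i j, i ≤ j → X i j = 0)
    (hY : ∀ i j, (i = Fin.last n ∨ j = Fin.last n) → Y i j = 0) :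
    ∃ B N : Matrix (Fin (n + 1)) (Fin (n + 1)) R,
      (∀ i j, (i = Fin.last n ∨ j = Fin.last n) → B i j = 0) ∧
      (∀ i j, i ≤ j → N i j = 0) ∧ ⁅X, Y⁆ = B + N := by
  set Z := ⁅X, Y⁆
  have hZ : ∀ i, Z i (Fin.last n) = 0 := fun i => by
    simp [Z, Ring.lie_def, Matrix.mul_apply, hX _ _ (Fin.le_last _), hY _ _ (Or.inr rfl)]
  refine ⟨.of fun i j => if i = Fin.last n then 0 else Z i j,
    .of fun i j => if i = Fin.last n then Z i j else 0, ?_, ?_, ?_⟩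
  · rintro i j (rfl | rfl) <;> simp [hZ]
  · intro i j hij
    rw [Matrix.of_apply]
    split_ifs with hi
    · subst hi
      rw [Fin.last_le_iff.1 hij, hZ]
    · rfl
  · ext i j
    by_cases hi : i = Fin.last n <;> simp [hi]

lemma uAction_ι_apply (V : Type*) [AddCommGroup V] [Module F V]
    [LieRingModule (gl F n) V] [LieModule F (gl F n) V] (X : gl F n) (v : V) :
    uAction F n V (ι F X) v = ⁅X, v⁆ := by
  rw [uAction, lift_ι_apply]
  rfl

theorem uea_lower_action_mem_general (V : Type*) [AddCommGroup V] [Module F V]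
    [LieRingModule (gl F n) V] [LieModule F (gl F n) V]
    (lam : V)
    (W : Submodule F V)
    (hW : W = Submodule.span F
      {v : V | ∃ a ∈ ueaBlock F n, ∃ z ∈ Subalgebra.center F
          (UniversalEnvelopingAlgebra F (gl F n)),
        v = uAction F n V a (uAction F n V z lam)})
    (hlower : ∀ X : gl F n, (∀ i j, i ≤ j → X i j = 0) → ⁅X, lam⁆ ∈ W) :
    ∀ u ∈ ueaLower F n, uAction F n V u lam ∈ W := by
  change W = subalgebraCenterSpan (uAction F n V) (ueaBlock F n) lam at hW
  subst hW
  intro u hu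
  refine apply_mem_subalgebraCenterSpan_of_mem_adjoin ?_ ?_ hu
  · rintro _ ⟨X, hX, rfl⟩ _ ⟨Y, hY, rfl⟩
    obtain ⟨B, N, hB, hN, hXY⟩ := Matrix.exists_lie_eq_block_add_strictLower hX hY
    refine ⟨ι F B, Algebra.subset_adjoin ⟨B, hB, rfl⟩, ι F N, ⟨N, hN, rfl⟩, ?_⟩
    rw [add_assoc, ← map_add, ← hXY, LieHom.map_lie, Ring.lie_def]
    abel
  · rintro _ ⟨X, hX, rfl⟩
    rw [uAction_ι_apply]
    exact hlower X hX

/-- Let `V` be a `gl_n(F)`-module (`F = ℝ` or `ℂ`) and `λ ≠ 0` with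
`E_{i,j}·λ = 0` for `j > i+1` and `E_{i,i+1}·λ = c_i·λ`, `c_i ≠ 0`.  If
`n̄·λ ⊆ U(gl_{n-1}(F))·Z(U(gl_n(F)))·λ`, then also
`U(n̄)·λ ⊆ U(gl_{n-1}(F))·Z(U(gl_n(F)))·λ`. -/
theorem uea_lower_action_mem (V : Type*) [AddCommGroup V] [Module F V]
    [LieRingModule (gl F n) V] [LieModule F (gl F n) V]
    (lam : V) (hlam : lam ≠ 0)
    (hzero : ∀ i j : Fin (n + 1), (i : ℕ) + 1 < (j : ℕ) →
      ⁅(Matrix.single i j (1 : F) : gl F n), lam⁆ = 0)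
    (heig : ∀ i : Fin n, ∃ c : F, c ≠ 0 ∧
      ⁅(Matrix.single i.castSucc i.succ (1 : F) : gl F n), lam⁆ = c • lam)
    (W : Submodule F V)
    (hW : W = Submodule.span F
      {v : V | ∃ a ∈ ueaBlock F n, ∃ z ∈ Subalgebra.center F
          (UniversalEnvelopingAlgebra F (gl F n)),
        v = uAction F n V a (uAction F n V z lam)})
    (hlower : ∀ X : gl F n, (∀ i j, i ≤ j → X i j = 0) → ⁅X, lam⁆ ∈ W) :
    ∀ u ∈ ueaLower F n, uAction F n V u lam ∈ W :=
  uea_lower_action_mem_general V lam W hW hlower
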